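/- Necessary condition (discrete Pontryagin minimum principle for completely observed control): in the discrete-time finite-state setting, if $u^*$ is a globally optimal control sequence, then for every time $t$ and every state $s$ with $p^*_t(s) > 0$, $u^*_t(s)$ minimizes $u \mapsto \mathcal{H}(t,s,u,w^*_{t+dt}) = f(t,s,u)+\sum_{s'}P_u(s,s')w^*_{t+dt}(s') - w^*_{t+dt}(s)$, where $p^*$ and $w^*$ are the forward distribution and backward value function of $u^*$. -/

import Mathlib

open Finset

/-- Forward state distribution for state-feedback controls. -/
def pFb {S U : Type} [Fintype S] (P : U → S → S → ℝ) (p0 : S → ℝ)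
    (u : ℕ → S → U) : ℕ → S → ℝ
  | 0 => p0
  | (t+1) => fun s' => ∑ s : S, pFb P p0 u t s * P (u t s) s s'

/-- Backward value function for state-feedback controls, indexed by the number
`k` of remaining steps. -/
def wbAux {S U : Type} [Fintype S] (P : U → S → S → ℝ)
    (f : ℕ → S → U → ℝ) (g : S → ℝ) (N : ℕ) (u : ℕ → S → U) : ℕ → S → ℝ
  | 0 => g
  | (k+1) => fun s =>
      f (N - (k+1)) s (u (N - (k+1)) s)
        + ∑ s' : S, P (u (N - (k+1)) s) s s' * wbAux P f g N u k s'

/-- Backward value function at time `t`, with `w_N = g`. -/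
def wbVal {S U : Type} [Fintype S] (P : U → S → S → ℝ)
    (f : ℕ → S → U → ℝ) (g : S → ℝ) (N : ℕ) (u : ℕ → S → U) (t : ℕ) : S → ℝ :=
  wbAux P f g N u (N - t)

/-- Total expected cost for state-feedback controls. -/
def Jb {S U : Type} [Fintype S] (P : U → S → S → ℝ) (p0 : S → ℝ)
    (f : ℕ → S → U → ℝ) (g : S → ℝ) (N : ℕ) (u : ℕ → S → U) : ℝ :=
  (∑ t ∈ Finset.range N, ∑ s : S, pFb P p0 u t s * f t s (u t s))
    + ∑ s : S, pFb P p0 u N s * g s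

/-- Discrete Hamiltonian `H(t,s,u,w) = f(t,s,u) + ∑ s' P_u(s,s') w(s') - w(s)`. -/
def Hd {S U : Type} [Fintype S] (P : U → S → S → ℝ) (f : ℕ → S → U → ℝ)
    (t : ℕ) (s : S) (v : U) (w : S → ℝ) : ℝ :=
  f t s v + (∑ s' : S, P v s s' * w s') - w s

/-!
Changing the control only at time `t` and state `s` (a needle variation) leaves the distribution
`p*_t` and the value function `w*_{t+1}` unchanged, so by the cost-to-go decomposition
`J = ∑_{r<t} E[f_r] + E_{p_t}[w_t]` and the Bellman recursion
`w_t(s) = H(t, s, u_t(s), w_{t+1}) + w_{t+1}(s)` the cost changes by exactly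
`p*_t(s) · (H(t, s, v, w*_{t+1}) - H(t, s, u*_t(s), w*_{t+1}))`. Optimality makes this nonnegative,
and `p*_t(s) > 0` makes the Hamiltonian difference nonnegative.
-/

section DiscreteControl

variable {S U : Type} [Fintype S] (P : U → S → S → ℝ) (p0 : S → ℝ) (f : ℕ → S → U → ℝ)
  (g : S → ℝ) (N : ℕ)

theorem pFb_congr {u u' : ℕ → S → U} {t : ℕ} (h : ∀ r < t, u r = u' r) :
    pFb P p0 u t = pFb P p0 u' t := by
  induction t with
  | zero => rfl
  | succ t ih =>
    funext s'
    simp only [pFb, ih fun r hr => h r (by omega), h t t.lt_succ_self]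

theorem wbAux_congr {u u' : ℕ → S → U} {k : ℕ} (h : ∀ r, N - k ≤ r → u r = u' r) :
    wbAux P f g N u k = wbAux P f g N u' k := by
  induction k with
  | zero => rfl
  | succ k ih =>
    funext s
    simp only [wbAux, ih fun r hr => h r (by omega), h (N - (k + 1)) le_rfl]

theorem wbVal_congr {u u' : ℕ → S → U} {t : ℕ} (h : ∀ r, t ≤ r → u r = u' r) :
    wbVal P f g N u t = wbVal P f g N u' t := by
  rcases le_or_gt t N with htN | hNt
  · exact wbAux_congr P f g N fun r hr => h r (by omega)
  · simp only [wbVal, Nat.sub_eq_zero_of_le hNt.le, wbAux]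

theorem wbVal_of_le (u : ℕ → S → U) {t : ℕ} (ht : N ≤ t) : wbVal P f g N u t = g := by
  simp only [wbVal, Nat.sub_eq_zero_of_le ht, wbAux]

theorem wbVal_of_lt (u : ℕ → S → U) {t : ℕ} (ht : t < N) (s : S) :
    wbVal P f g N u t s
      = f t s (u t s) + ∑ s', P (u t s) s s' * wbVal P f g N u (t + 1) s' := by
  obtain ⟨k, hk⟩ : ∃ k, N - t = k + 1 := ⟨N - (t + 1), by omega⟩
  have hNk : N - (k + 1) = t := by omega
  have hk' : N - (t + 1) = k := by omega
  simp only [wbVal, hk, hk', wbAux, hNk]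

theorem wbVal_eq_Hd_add (u : ℕ → S → U) {t : ℕ} (ht : t < N) (s : S) :
    wbVal P f g N u t s
      = Hd P f t s (u t s) (wbVal P f g N u (t + 1)) + wbVal P f g N u (t + 1) s := by
  rw [wbVal_of_lt P f g N u ht, Hd]
  ring

theorem sum_pFb_succ_mul (u : ℕ → S → U) (t : ℕ) (w : S → ℝ) :
    ∑ s', pFb P p0 u (t + 1) s' * w s'
      = ∑ s, pFb P p0 u t s * ∑ s', P (u t s) s s' * w s' := by
  simp only [pFb, Finset.sum_mul, Finset.mul_sum, mul_assoc]
  exact Finset.sum_comm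

theorem Jb_eq_sum_add_sum_pFb_mul_wbVal (u : ℕ → S → U) {t : ℕ} (ht : t ≤ N) :
    Jb P p0 f g N u
      = (∑ r ∈ range t, ∑ s, pFb P p0 u r s * f r s (u r s))
        + ∑ s, pFb P p0 u t s * wbVal P f g N u t s := by
  induction ht using Nat.decreasingInduction with
  | self => rw [wbVal_of_le P f g N u le_rfl, Jb]
  | of_succ t ht ih =>
    rw [ih, sum_range_succ, sum_pFb_succ_mul, add_assoc, ← sum_add_distrib]
    simp only [wbVal_of_lt P f g N u ht, mul_add]

theorem Jb_update_sub (u : ℕ → S → U) {t : ℕ} (ht : t < N) (a : S → U) :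
    Jb P p0 f g N (Function.update u t a) - Jb P p0 f g N u
      = ∑ s, pFb P p0 u t s * (Hd P f t s (a s) (wbVal P f g N u (t + 1))
          - Hd P f t s (u t s) (wbVal P f g N u (t + 1))) := by
  set u' := Function.update u t a
  have h_lt : ∀ r < t, u' r = u r := fun r hr => Function.update_of_ne hr.ne _ _
  have h_gt : ∀ r, t + 1 ≤ r → u' r = u r := fun r hr => Function.update_of_ne (by omega) _ _
  have hp : ∀ r ≤ t, pFb P p0 u' r = pFb P p0 u r :=
    fun r hr => pFb_congr P p0 fun r' hr' => h_lt r' (by omega)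
  have hw : wbVal P f g N u' (t + 1) = wbVal P f g N u (t + 1) := wbVal_congr P f g N h_gt
  have hu't : u' t = a := Function.update_self _ _ _
  have hrun : ∀ r ∈ range t, ∑ s, pFb P p0 u' r s * f r s (u' r s)
      = ∑ s, pFb P p0 u r s * f r s (u r s) := fun r hr => by
    rw [hp r (mem_range.mp hr).le, h_lt r (mem_range.mp hr)]
  rw [Jb_eq_sum_add_sum_pFb_mul_wbVal P p0 f g N u' ht.le,
    Jb_eq_sum_add_sum_pFb_mul_wbVal P p0 f g N u ht.le, sum_congr rfl hrun, hp t le_rfl,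
    add_sub_add_left_eq_sub, ← sum_sub_distrib]
  refine sum_congr rfl fun s _ => ?_
  rw [wbVal_eq_Hd_add P f g N u' ht, wbVal_eq_Hd_add P f g N u ht, hw, hu't]
  ring

theorem Jb_needle_sub [DecidableEq S] (u : ℕ → S → U) {t : ℕ} (ht : t < N) (s : S) (v : U) :
    Jb P p0 f g N (Function.update u t (Function.update (u t) s v)) - Jb P p0 f g N u
      = pFb P p0 u t s * (Hd P f t s v (wbVal P f g N u (t + 1))
          - Hd P f t s (u t s) (wbVal P f g N u (t + 1))) := by
  rw [Jb_update_sub P p0 f g N u ht, sum_eq_single s]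
  · rw [Function.update_self]
  · intro s' _ hs'
    rw [Function.update_of_ne hs', sub_self, mul_zero]
  · exact fun hs => absurd (mem_univ s) hs

end DiscreteControl

theorem discrete_pontryagin_necessary_condition_COSC_general
    {S U : Type} [Fintype S]
    (P : U → S → S → ℝ)
    (p0 : S → ℝ)
    (f : ℕ → S → U → ℝ) (g : S → ℝ) (N : ℕ)
    (uStar : ℕ → S → U)
    (hopt : ∀ u : ℕ → S → U, Jb P p0 f g N uStar ≤ Jb P p0 f g N u) :
    ∀ t < N, ∀ s : S, 0 < pFb P p0 uStar t s →
      ∀ v : U,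
        Hd P f t s (uStar t s) (wbVal P f g N uStar (t+1))
          ≤ Hd P f t s v (wbVal P f g N uStar (t+1)) := by
  classical
  intro t ht s hs v
  have hvar := Jb_needle_sub P p0 f g N uStar ht s v
  have hnonneg : 0 ≤ pFb P p0 uStar t s * (Hd P f t s v (wbVal P f g N uStar (t + 1))
      - Hd P f t s (uStar t s) (wbVal P f g N uStar (t + 1))) :=
    hvar ▸ sub_nonneg.mpr (hopt _)
  exact sub_nonneg.mp (nonneg_of_mul_nonneg_right hnonneg hs)

theorem discrete_pontryagin_necessary_condition_COSC
    {S U : Type} [Fintype S]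
    (P : U → S → S → ℝ)
    (hPnonneg : ∀ u s s', 0 ≤ P u s s')
    (hPsum : ∀ u s, ∑ s' : S, P u s s' = 1)
    (p0 : S → ℝ) (hp0nonneg : ∀ s, 0 ≤ p0 s) (hp0sum : ∑ s : S, p0 s = 1)
    (f : ℕ → S → U → ℝ) (g : S → ℝ) (N : ℕ)
    (uStar : ℕ → S → U)
    (hopt : ∀ u : ℕ → S → U, Jb P p0 f g N uStar ≤ Jb P p0 f g N u) :
    ∀ t < N, ∀ s : S, 0 < pFb P p0 uStar t s →
      ∀ v : U,
        Hd P f t s (uStar t s) (wbVal P f g N uStar (t+1))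
          ≤ Hd P f t s v (wbVal P f g N uStar (t+1)) :=
  discrete_pontryagin_necessary_condition_COSC_general P p0 f g N uStar hopt
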